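/- Every factor of a finite rich word is rich. -/

import Mathlib

/-!
Appending a letter to a word creates at most one new palindromic factor: any two palindromic
suffixes are comparable, and the shorter one is also a prefix of the longer, so it already occurs
before the last letter. Hence `#Pal (p ++ q) ≤ #Pal p + |q|` and `#Pal w ≤ |w| + 1`, so richness of
`p ++ q` forces richness of `p`. A word and its reversal have the same palindromic factors, which
gives the same for suffixes, and a factor is a suffix of a prefix.
-/

/-- The finset of (distinct) palindromic factors of a finite word `w`,
including the empty word. -/
def palFactors {A : Type*} [DecidableEq A] (w : List A) : Finset (List A) :=
  ((w.inits.flatMap List.tails).filter (fun u => u.reverse = u)).toFinset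

/-- A finite word `w` is rich if it has exactly `|w| + 1` distinct palindromic factors. -/
def Rich {A : Type*} [DecidableEq A] (w : List A) : Prop :=
  (palFactors w).card = w.length + 1

namespace List

variable {A : Type*} {u v w : List A} {a : A}

theorem eq_or_infix_of_prefix_of_suffix_concat (huv : u <+: v) (hv : v <:+ w ++ [a]) :
    u = v ∨ u <:+: w := by
  rcases suffix_concat_iff.1 hv with rfl | ⟨t, rfl, ht⟩
  · exact .inl (prefix_nil.1 huv)
  · exact (prefix_concat_iff.1 huv).imp_right fun h => h.isInfix.trans ht.isInfix

theorem eq_of_palindrome_suffix_concat_of_not_infix (hu : u.reverse = u) (hv : v.reverse = v)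
    (hus : u <:+ w ++ [a]) (hvs : v <:+ w ++ [a]) (hu' : ¬u <:+: w) (hv' : ¬v <:+: w) :
    u = v := by
  rcases suffix_or_suffix_of_suffix hus hvs with h | h
  · have huv : u <+: v := by rw [← hu, ← hv]; exact reverse_prefix.2 h
    exact (eq_or_infix_of_prefix_of_suffix_concat huv hvs).resolve_right hu'
  · have hvu : v <+: u := by rw [← hu, ← hv]; exact reverse_prefix.2 h
    exact ((eq_or_infix_of_prefix_of_suffix_concat hvu hus).resolve_right hv').symm

end List

section

variable {A : Type*} [DecidableEq A]

theorem mem_palFactors {u w : List A} : u ∈ palFactors w ↔ u <:+: w ∧ u.reverse = u := by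
  simp only [palFactors, List.mem_toFinset, List.mem_filter, List.mem_flatMap,
    List.mem_inits, List.mem_tails, decide_eq_true_eq]
  constructor
  · rintro ⟨⟨t, ht, hu⟩, hp⟩
    exact ⟨hu.isInfix.trans ht.isInfix, hp⟩
  · rintro ⟨⟨s, t, h⟩, hp⟩
    exact ⟨⟨s ++ u, ⟨t, by simpa using h⟩, ⟨s, rfl⟩⟩, hp⟩

@[simp]
theorem palFactors_nil : palFactors ([] : List A) = {[]} := rfl

@[simp]
theorem palFactors_reverse (w : List A) : palFactors w.reverse = palFactors w := by
  ext u
  simp only [mem_palFactors]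
  constructor
  · rintro ⟨hi, hp⟩
    exact ⟨by simpa [hp] using List.reverse_infix.2 hi, hp⟩
  · rintro ⟨hi, hp⟩
    exact ⟨by rwa [← hp, List.reverse_infix], hp⟩

theorem card_palFactors_concat_le (w : List A) (a : A) :
    (palFactors (w ++ [a])).card ≤ (palFactors w).card + 1 := by
  have new_suffix : ∀ u ∈ palFactors (w ++ [a]) \ palFactors w,
      u.reverse = u ∧ u <:+ w ++ [a] ∧ ¬u <:+: w := by
    intro u hu
    obtain ⟨hu, hold⟩ := Finset.mem_sdiff.1 hu
    obtain ⟨hi, hp⟩ := mem_palFactors.1 hu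
    have hnot : ¬u <:+: w := fun h => hold (mem_palFactors.2 ⟨h, hp⟩)
    exact ⟨hp, (List.infix_concat_iff.1 hi).resolve_right hnot, hnot⟩
  have hnew : (palFactors (w ++ [a]) \ palFactors w).card ≤ 1 := by
    refine Finset.card_le_one.2 fun u hu v hv => ?_
    obtain ⟨hup, hus, hu'⟩ := new_suffix u hu
    obtain ⟨hvp, hvs, hv'⟩ := new_suffix v hv
    exact List.eq_of_palindrome_suffix_concat_of_not_infix hup hvp hus hvs hu' hv'
  calc (palFactors (w ++ [a])).card
      ≤ (palFactors (w ++ [a]) \ palFactors w).card + (palFactors w).card :=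
        Finset.card_le_card_sdiff_add_card
    _ ≤ (palFactors w).card + 1 := by omega

theorem card_palFactors_append_le (p q : List A) :
    (palFactors (p ++ q)).card ≤ (palFactors p).card + q.length := by
  induction q using List.reverseRecOn with
  | nil => simp
  | append_singleton q a ih =>
    have := card_palFactors_concat_le (p ++ q) a
    rw [← List.append_assoc, List.length_append, List.length_singleton]
    omega

theorem card_palFactors_le (w : List A) : (palFactors w).card ≤ w.length + 1 := by
  simpa [add_comm] using card_palFactors_append_le [] w

theorem Rich.of_append_left {p q : List A} (h : Rich (p ++ q)) : Rich p := by
  have := card_palFactors_append_le p q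
  have := card_palFactors_le p
  unfold Rich at h ⊢
  rw [List.length_append] at h
  omega

@[simp]
theorem rich_reverse_iff {w : List A} : Rich w.reverse ↔ Rich w := by
  simp [Rich]

theorem Rich.of_append_right {p q : List A} (h : Rich (p ++ q)) : Rich q := by
  rw [← rich_reverse_iff, List.reverse_append] at h
  exact rich_reverse_iff.1 h.of_append_left

end

/-- Every factor of a finite rich word is rich. -/
theorem factor_of_rich_isRich {A : Type*} [DecidableEq A]
    (w u : List A) (hw : Rich w) (hu : u <:+: w) : Rich u := by
  obtain ⟨s, t, rfl⟩ := hu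
  exact hw.of_append_left.of_append_right
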